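/- arXiv:1003.4407 — 4 statements merged into one kernel-verified Lean document; each statement's English description precedes it below -/
import Mathlib

section
/- Let l be a positive integer with l ∉ {1,2,4,8}. Then there exists a primitive (l+2)-th root of unity q̃ in ℂ such that Re(q̃²) > Re(q̃). -/
/-!
Pick `k` coprime to `n = l + 2` with `n < 3k < 2n`; this is possible exactly when
`n ∉ {3, 4, 6, 10}`. Then `q = exp (2πik/n)` is a primitive `n`-th root of unity with argument
in `(2π/3, 4π/3)`, so `Re q < -1/2`, and for `|q| = 1` we have `Re q² = 2 (Re q)² - 1 > Re q`.
-/

open Real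

theorem Real.cos_lt_neg_half {θ : ℝ} (h₁ : 2 * π / 3 < θ) (h₂ : θ < 4 * π / 3) :
    cos θ < -1 / 2 := by
  have habs : |θ - π| < π / 3 := abs_lt.mpr ⟨by linarith, by linarith⟩
  have hcos : cos (π / 3) < cos |θ - π| :=
    cos_lt_cos_of_nonneg_of_le_pi (abs_nonneg _) (by linarith [pi_pos]) habs
  rw [cos_pi_div_three, cos_abs, cos_sub_pi] at hcos
  linarith

theorem Complex.re_lt_re_sq_of_norm_eq_one {q : ℂ} (hq : ‖q‖ = 1) (hre : q.re < -1 / 2) :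
    q.re < (q ^ 2).re := by
  have him := Complex.sq_norm_sub_sq_re q
  rw [hq] at him
  rw [sq, Complex.mul_re]
  nlinarith

theorem Complex.re_exp_two_pi_mul_I_div_lt_neg_half {k n : ℕ} (hlo : n < 3 * k) (hhi : 3 * k < 2 * n) :
    (Complex.exp (2 * π * Complex.I * (k / n))).re < -1 / 2 := by
  have hn : (0 : ℝ) < n := by exact_mod_cast (show 0 < n by omega)
  have harg : 2 * π * Complex.I * (k / n) = ((2 * π * k / n : ℝ) : ℂ) * Complex.I := by
    push_cast; ring
  rw [harg, Complex.exp_ofReal_mul_I_re]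
  have hlo' : (n : ℝ) < 3 * k := by exact_mod_cast hlo
  have hhi' : 3 * (k : ℝ) < 2 * n := by exact_mod_cast hhi
  apply Real.cos_lt_neg_half
  · rw [div_lt_div_iff₀ (by norm_num) hn]; nlinarith [pi_pos]
  · rw [div_lt_div_iff₀ hn (by norm_num)]; nlinarith [pi_pos]

theorem Nat.exists_coprime_three_mul_mem_Ioo {n : ℕ} (h5 : 5 ≤ n) (h6 : n ≠ 6) (h10 : n ≠ 10) :
    ∃ k, k.Coprime n ∧ n < 3 * k ∧ 3 * k < 2 * n := by
  -- `k` is the least integer above `n / 2` that is coprime to `n`.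
  obtain ⟨m, rfl | rfl⟩ := Nat.even_or_odd' n
  · obtain ⟨t, rfl | rfl⟩ := Nat.even_or_odd' m
    · refine ⟨2 * t + 1, ?_, by omega, by omega⟩
      exact Nat.Coprime.mul_right (Nat.coprime_two_right.mpr (odd_two_mul_add_one t))
        (Nat.coprime_self_add_left.mpr (Nat.coprime_one_left _))
    · refine ⟨2 * t + 1 + 2, ?_, by omega, by omega⟩
      exact Nat.Coprime.mul_right (Nat.coprime_two_right.mpr ⟨t + 1, by ring⟩)
        (Nat.coprime_self_add_left.mpr (Nat.coprime_two_left.mpr (odd_two_mul_add_one t)))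
  · refine ⟨m + 1, ?_, by omega, by omega⟩
    exact Nat.Coprime.coprime_dvd_left ⟨2, by ring⟩
      (Nat.coprime_self_add_left.mpr (Nat.coprime_one_left _))

/-- For a positive integer `l ∉ {1,2,4,8}` there exists a primitive `(l+2)`-th root of
unity `q̃` in `ℂ` with `Re(q̃²) > Re(q̃)`. -/
theorem stmt_2 (l : ℕ) (hl : 1 ≤ l) (hl' : l ∉ ({1, 2, 4, 8} : Set ℕ)) :
    ∃ q : ℂ, IsPrimitiveRoot q (l + 2) ∧ q.re < (q ^ 2).re := by
  simp only [Set.mem_insert_iff, Set.mem_singleton_iff, not_or] at hl'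
  obtain ⟨k, hk, hlo, hhi⟩ := Nat.exists_coprime_three_mul_mem_Ioo (n := l + 2)
    (by omega) (by omega) (by omega)
  have hq := Complex.isPrimitiveRoot_exp_of_coprime k _ (by omega) hk
  exact ⟨_, hq, Complex.re_lt_re_sq_of_norm_eq_one (hq.norm'_eq_one (by omega))
    (Complex.re_exp_two_pi_mul_I_div_lt_neg_half hlo hhi)⟩
end

section
/- Let q = exp(2πi/(l+2)) with l a positive integer not in {1,2,4,8}, and let M ∈ SL(2,ℂ) have trace 2 − q − q⁻¹ + q² + q⁻². Then M has infinite order in SL(2,ℂ). -/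
/-!
If `M ^ m = 1`, an eigenvalue `c` of `M` is an `m`-th root of unity with `c + c⁻¹ = tr M`.
The prescribed trace equals `w² - w` for `w = q + q⁻¹`. For `n = l + 2 ∉ {3, 4, 6, 10}` there
is `k` prime to `n` with `n/3 < k < n/2`, and an embedding of `ℚ(c, q)` into `ℂ` sending
`q ↦ q ^ k` maps `c` to another root of unity `c'`. Hence `‖c' + c'⁻¹‖ ≤ 2`, whereas
`c' + c'⁻¹ = w'² - w'` with `w' = q ^ k + q ^ (-k) = 2 cos (2πk/n) < -1`, which exceeds `2`.
-/

open Complex Matrix IntermediateField Polynomial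
open scoped Real

lemma Nat.exists_coprime_gt_third_lt_half {n : ℕ} (hn : 5 ≤ n) (h6 : n ≠ 6) (h10 : n ≠ 10) :
    ∃ k : ℕ, k.Coprime n ∧ n < 3 * k ∧ 2 * k < n := by
  -- write `n = 2k + d` with `d ∈ {1, 2, 4}` and `k` coprime to `d`; then `gcd(k, n) = gcd(k, d)`
  obtain ⟨k, d, rfl, hd, hkd, h3k⟩ :
      ∃ k d : ℕ, n = d + k * 2 ∧ 0 < d ∧ k.Coprime d ∧ d + k * 2 < 3 * k := by
    rcases (by omega : n % 2 = 1 ∨ n % 4 = 0 ∨ n % 4 = 2) with h | h | h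
    · exact ⟨n / 2, 1, by omega, by norm_num, Nat.coprime_one_right _, by omega⟩
    · exact ⟨n / 2 - 1, 2, by omega, by norm_num, Nat.coprime_two_right.mpr (by
        rw [Nat.odd_iff]; omega), by omega⟩
    · exact ⟨n / 2 - 2, 2 ^ 2, by omega, by norm_num, (Nat.coprime_two_right.mpr (by
        rw [Nat.odd_iff]; omega)).pow_right 2, by omega⟩
  exact ⟨k, (Nat.coprime_add_mul_left_right k d 2).mpr hkd, h3k, by omega⟩

lemma Matrix.trace_eq_add_inv_of_hasEigenvalue {K : Type*} [Field K]
    {M : Matrix (Fin 2) (Fin 2) K} (hdet : M.det = 1) {c : K}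
    (hc : Module.End.HasEigenvalue (Matrix.toLin' M) c) : M.trace = c + c⁻¹ := by
  have hroot : c ^ 2 - M.trace * c + 1 = 0 := by
    simpa [Module.End.hasEigenvalue_iff_isRoot_charpoly, Matrix.charpoly_toLin',
      Matrix.charpoly_fin_two, hdet] using hc
  have hc0 : c ≠ 0 := by rintro rfl; simp at hroot
  field_simp
  linear_combination -hroot

lemma Matrix.exists_pow_eq_one_trace_eq_add_inv {K : Type*} [Field K] [IsAlgClosed K]
    {M : Matrix (Fin 2) (Fin 2) K} (hdet : M.det = 1) {m : ℕ} (hM : M ^ m = 1) :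
    ∃ c : K, c ^ m = 1 ∧ M.trace = c + c⁻¹ := by
  obtain ⟨c, hc⟩ := Module.End.exists_eigenvalue (Matrix.toLin' M)
  obtain ⟨v, hv⟩ := hc.exists_hasEigenvector
  refine ⟨c, ?_, M.trace_eq_add_inv_of_hasEigenvalue hdet hc⟩
  have hpow := hv.pow_apply m
  rw [← Matrix.toLin'_pow, hM, Matrix.toLin'_one, LinearMap.id_apply] at hpow
  exact smul_left_injective K hv.2 (by simpa using hpow.symm)

lemma IsPrimitiveRoot.exists_algHom_adjoin_apply_eq_pow {L : Type*} [Field L] [CharZero L]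
    [IsAlgClosed L] {S : Set L} (hS : ∀ s ∈ S, IsIntegral ℚ s) {q : L} {n : ℕ}
    (hq : IsPrimitiveRoot q n) (hn : 0 < n) (hqS : q ∈ adjoin ℚ S) {k : ℕ} (hk : k.Coprime n) :
    ∃ φ : adjoin ℚ S →ₐ[ℚ] L, φ ⟨q, hqS⟩ = q ^ k := by
  refine exists_algHom_adjoin_of_splits_of_aeval (fun s hs ↦ ⟨hS s hs, IsAlgClosed.splits _⟩)
    hqS ?_
  rw [← cyclotomic_eq_minpoly_rat hq hn, aeval_def, eval₂_eq_eval_map, map_cyclotomic]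
  exact (hq.pow_of_coprime k hk).isRoot_cyclotomic hn

def specialTrace {K : Type*} [DivisionRing K] (z : K) : K :=
  2 - z - z⁻¹ + z ^ 2 + (z ^ 2)⁻¹

lemma map_specialTrace {K L F : Type*} [DivisionRing K] [DivisionRing L] [FunLike F K L]
    [RingHomClass F K L] (φ : F) (z : K) : φ (specialTrace z) = specialTrace (φ z) := by
  simp [specialTrace, map_inv₀, map_ofNat]

lemma exists_pow_eq_one_add_inv_eq_specialTrace_pow {c q : ℂ} {m n k : ℕ} (hm : 0 < m)
    (hc : c ^ m = 1) (hq : IsPrimitiveRoot q n) (hn : 0 < n) (hk : k.Coprime n)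
    (h : c + c⁻¹ = specialTrace q) :
    ∃ c' : ℂ, c' ^ m = 1 ∧ c' + c'⁻¹ = specialTrace (q ^ k) := by
  have hS : ∀ s ∈ ({c, q} : Set ℂ), IsIntegral ℚ s := by
    rintro s (rfl | rfl)
    · exact IsIntegral.of_pow hm (hc ▸ isIntegral_one)
    · exact IsIntegral.of_pow hn (hq.pow_eq_one ▸ isIntegral_one)
  have hcS : c ∈ adjoin ℚ {c, q} := subset_adjoin _ _ (by simp)
  have hqS : q ∈ adjoin ℚ {c, q} := subset_adjoin _ _ (by simp)
  obtain ⟨φ, hφ⟩ := hq.exists_algHom_adjoin_apply_eq_pow hS hn hqS hk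
  refine ⟨φ ⟨c, hcS⟩, by rw [← map_pow, ← map_one φ]; exact congrArg φ (Subtype.ext hc), ?_⟩
  have hrel : (⟨c, hcS⟩ : adjoin ℚ {c, q}) + (⟨c, hcS⟩)⁻¹ = specialTrace ⟨q, hqS⟩ :=
    Subtype.ext (by push_cast [specialTrace]; exact h)
  rw [← map_inv₀, ← map_add, hrel, map_specialTrace, hφ]

lemma norm_add_inv_le_two_of_pow_eq_one {z : ℂ} {m : ℕ} (hm : 0 < m) (hz : z ^ m = 1) :
    ‖z + z⁻¹‖ ≤ 2 := by
  have h1 : ‖z‖ = 1 := Complex.norm_eq_one_of_pow_eq_one hz hm.ne'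
  calc ‖z + z⁻¹‖ ≤ ‖z‖ + ‖z⁻¹‖ := norm_add_le _ _
    _ = 2 := by rw [norm_inv, h1]; norm_num

lemma two_lt_norm_specialTrace_exp {θ : ℝ} (hθ : Real.cos θ < -(1 / 2)) :
    2 < ‖specialTrace (exp (θ * I))‖ := by
  set z := exp (θ * I)
  have hz : z + z⁻¹ = 2 * Real.cos θ := by
    rw [← exp_neg, ← neg_mul, ofReal_cos, two_cos]
  have hw : specialTrace z = ((2 * Real.cos θ) ^ 2 - 2 * Real.cos θ : ℝ) := by
    have hsq : specialTrace z = (z + z⁻¹) ^ 2 - (z + z⁻¹) := by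
      have h := mul_inv_cancel₀ (exp_ne_zero (θ * I))
      simp only [specialTrace]
      linear_combination (-2 : ℂ) * h
    rw [hsq, hz]
    push_cast
    ring
  rw [hw, norm_real, Real.norm_eq_abs]
  nlinarith [le_abs_self ((2 * Real.cos θ) ^ 2 - 2 * Real.cos θ)]

lemma Real.cos_two_pi_mul_div_lt_neg_half {k n : ℕ} (h3 : n < 3 * k) (h2 : 2 * k < n) :
    Real.cos (2 * π * k / n) < -(1 / 2) := by
  have hn : (0 : ℝ) < n := by exact_mod_cast (by omega : 0 < n)
  have h3' : (n : ℝ) < 3 * k := by exact_mod_cast h3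
  have h2' : (2 * k : ℝ) < n := by exact_mod_cast h2
  have hlo : 2 * π / 3 < 2 * π * k / n := by
    rw [div_lt_div_iff₀ (by norm_num) hn]; nlinarith [Real.pi_pos]
  have hhi : 2 * π * k / n ≤ π := by
    rw [div_le_iff₀ hn]; nlinarith [Real.pi_pos]
  calc Real.cos (2 * π * k / n) < Real.cos (2 * π / 3) :=
        Real.cos_lt_cos_of_nonneg_of_le_pi (by positivity) hhi hlo
    _ = -(1 / 2) := by
        rw [show 2 * π / 3 = π - π / 3 by ring, Real.cos_pi_sub, Real.cos_pi_div_three]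

/-- For `q = exp(2πi/(l+2))` with `l ∉ {1,2,4,8}`, any `M ∈ SL(2,ℂ)` of trace
`2 - q - q⁻¹ + q² + q⁻²` has infinite order. -/
theorem stmt_4 (l : ℕ) (hl : 1 ≤ l) (hl' : l ∉ ({1, 2, 4, 8} : Set ℕ)) (q : ℂ)
    (hq : q = Complex.exp (2 * Real.pi * I / (l + 2)))
    (M : Matrix (Fin 2) (Fin 2) ℂ) (hdet : M.det = 1)
    (htr : M.trace = 2 - q - q⁻¹ + q ^ 2 + (q ^ 2)⁻¹) :
    ∀ n : ℕ, 0 < n → M ^ n ≠ 1 := by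
  intro m hm hMm
  obtain ⟨c, hcm, hctr⟩ := M.exists_pow_eq_one_trace_eq_add_inv hdet hMm
  have hn : 5 ≤ l + 2 ∧ l + 2 ≠ 6 ∧ l + 2 ≠ 10 := by
    simp only [Set.mem_insert_iff, Set.mem_singleton_iff, not_or] at hl'
    omega
  obtain ⟨k, hk, h3k, h2k⟩ := Nat.exists_coprime_gt_third_lt_half hn.1 hn.2.1 hn.2.2
  have hqprim : IsPrimitiveRoot q (l + 2) := by
    rw [hq]; exact_mod_cast Complex.isPrimitiveRoot_exp (l + 2) (by omega)
  obtain ⟨c', hc'm, hc'⟩ := exists_pow_eq_one_add_inv_eq_specialTrace_pow hm hcm hqprim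
    (by omega) hk (hctr ▸ htr)
  have hqk : q ^ k = exp ((2 * π * k / (l + 2 : ℕ) : ℝ) * I) := by
    rw [hq, ← exp_nat_mul]; push_cast; ring_nf
  have hbig := two_lt_norm_specialTrace_exp (Real.cos_two_pi_mul_div_lt_neg_half h3k h2k)
  rw [← hqk, ← hc'] at hbig
  exact (norm_add_inv_le_two_of_pow_eq_one hm hc'm).not_gt hbig
end

section
/- Let q = exp(2πi/4) = i (the case l = 2) and t = sqrt(q(1+q+q²)). Then the images in PGL(2,ℂ) of m₁ = BA⁻²B and m₂ = B², where A = q^{-3/4}·diag(q,−1) and B = (q^{-3/4}/(q+1))·[[−1,t],[t,q²]], generate a group isomorphic to the Klein four group ℤ/2 × ℤ/2. -/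
/-! At `q = i` the relation for `t` reads `t² = -1`, and a direct computation gives
`m₁ = -i · diag(-1, 1)` and `m₂ = s · [[0, 1], [1, 0]]` for a scalar `s`. Both square to scalar
matrices and they anticommute, so their images in `PGL(2, ℂ)` are commuting involutions.
Anticommutation also shows that none of `m₁`, `m₂`, `m₁⁻¹ m₂` is central, so the images are
nontrivial and distinct, and two such involutions generate a Klein four group. -/

open Complex Matrix

/-- `PGL(2,ℂ)` as the quotient of `GL(2,ℂ)` by its center (the scalar matrices). -/
abbrev PGL2 : Type := GL (Fin 2) ℂ ⧸ Subgroup.center (GL (Fin 2) ℂ)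

section KleinFour

open Subgroup QuotientGroup

variable {G : Type*} [Group G]

noncomputable def zmodTwoHom (g : G) (hg : g ^ 2 = 1) : Multiplicative (ZMod 2) →* G :=
  AddMonoidHom.toMultiplicativeLeft <| ZMod.lift 2 ⟨zmultiplesHom _ (Additive.ofMul g), by
    rw [zmultiplesHom_apply, ← ofMul_zpow, zpow_natCast, hg, ofMul_one]⟩

@[simp]
lemma zmodTwoHom_ofAdd_one (g : G) (hg : g ^ 2 = 1) :
    zmodTwoHom g hg (Multiplicative.ofAdd 1) = g :=
  congrArg Additive.toMul ((ZMod.lift_coe 2 _ 1).trans (one_zsmul _))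

lemma Multiplicative.zmod_two_eq_one_or_eq_ofAdd_one (a : Multiplicative (ZMod 2)) :
    a = 1 ∨ a = Multiplicative.ofAdd 1 := by
  revert a; decide

section

variable {x y : G} (hx : x ^ 2 = 1) (hy : y ^ 2 = 1) (hxy : Commute x y)

noncomputable def kleinHom : Multiplicative (ZMod 2) × Multiplicative (ZMod 2) →* G :=
  (zmodTwoHom x hx).noncommCoprod (zmodTwoHom y hy) fun a b => by
    rcases a.zmod_two_eq_one_or_eq_ofAdd_one with rfl | rfl <;>
      rcases b.zmod_two_eq_one_or_eq_ofAdd_one with rfl | rfl <;> simp [hxy]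

lemma kleinHom_apply (a b : Multiplicative (ZMod 2)) :
    kleinHom hx hy hxy (a, b) = zmodTwoHom x hx a * zmodTwoHom y hy b := rfl

lemma range_kleinHom : (kleinHom hx hy hxy).range = closure {x, y} := by
  apply le_antisymm
  · rintro _ ⟨⟨a, b⟩, rfl⟩
    have hx' : x ∈ closure {x, y} := subset_closure (Set.mem_insert x _)
    have hy' : y ∈ closure {x, y} := subset_closure (Set.mem_insert_of_mem x rfl)
    rcases a.zmod_two_eq_one_or_eq_ofAdd_one with rfl | rfl <;>
      rcases b.zmod_two_eq_one_or_eq_ofAdd_one with rfl | rfl <;>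
      simp [kleinHom_apply, hx', hy', mul_mem]
  · rw [closure_le, Set.insert_subset_iff, Set.singleton_subset_iff]
    exact ⟨⟨(.ofAdd 1, 1), by simp [kleinHom_apply]⟩, ⟨(1, .ofAdd 1), by simp [kleinHom_apply]⟩⟩

lemma kleinHom_injective (hx1 : x ≠ 1) (hy1 : y ≠ 1) (hne : x ≠ y) :
    Function.Injective (kleinHom hx hy hxy) := by
  rw [injective_iff_map_eq_one]
  rintro ⟨a, b⟩ hab
  rcases a.zmod_two_eq_one_or_eq_ofAdd_one with rfl | rfl <;>
    rcases b.zmod_two_eq_one_or_eq_ofAdd_one with rfl | rfl <;>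
    simp only [kleinHom_apply, map_one, zmodTwoHom_ofAdd_one, one_mul, mul_one] at hab
  · rfl
  · exact absurd hab hy1
  · exact absurd hab hx1
  · refine absurd ?_ hne
    rw [← inv_eq_of_mul_eq_one_right hab, inv_eq_of_mul_eq_one_right (by rw [← sq, hx])]

end

theorem nonempty_closure_pair_mulEquiv_klein {x y : G} (hx : x ^ 2 = 1)
    (hy : y ^ 2 = 1) (hxy : Commute x y) (hx1 : x ≠ 1) (hy1 : y ≠ 1) (hne : x ≠ y) :
    Nonempty (closure {x, y} ≃* Multiplicative (ZMod 2) × Multiplicative (ZMod 2)) :=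
  ⟨(MulEquiv.subgroupCongr (range_kleinHom hx hy hxy).symm).trans
    (MonoidHom.ofInjective (kleinHom_injective hx hy hxy hx1 hy1 hne)).symm⟩

theorem nonempty_closure_mk_mulEquiv_klein {u v ε : G} (hε : ε ∈ center G) (hε1 : ε ≠ 1)
    (hu : u ^ 2 ∈ center G) (hv : v ^ 2 ∈ center G) (huv : v * u = ε * (u * v)) :
    Nonempty (closure {(u : G ⧸ center G), (v : G ⧸ center G)} ≃*
      Multiplicative (ZMod 2) × Multiplicative (ZMod 2)) := by
  have hnc : ¬Commute u v := fun h => hε1 (by simpa [h.eq] using huv)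
  have hu_notMem : u ∉ center G := fun h => hnc (mem_center_iff.mp h v).symm
  have hv_notMem : v ∉ center G := fun h => hnc (mem_center_iff.mp h u)
  have huv_notMem : u⁻¹ * v ∉ center G := fun h =>
    hnc (by simpa using (Commute.refl u).mul_right (mem_center_iff.mp h u))
  refine nonempty_closure_pair_mulEquiv_klein ?_ ?_ ?_ ?_ ?_ ?_
  · rwa [← mk_pow, eq_one_iff]
  · rwa [← mk_pow, eq_one_iff]
  · show (u : G ⧸ center G) * v = v * u
    rwa [← mk_mul, ← mk_mul, QuotientGroup.eq, huv, ← mem_center_iff.mp hε, inv_mul_cancel_left]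
  · rwa [Ne, eq_one_iff]
  · rwa [Ne, eq_one_iff]
  · rwa [Ne, QuotientGroup.eq]

end KleinFour

namespace Matrix.GeneralLinearGroup

variable {n R : Type*} [Fintype n] [DecidableEq n] [CommRing R]

lemma mem_center_of_val_eq_smul_one {g : GL n R} {r : R} (h : g.val = r • 1) :
    g ∈ Subgroup.center (GL n R) :=
  mem_center_iff_val_mem_range_scalar.mpr ⟨r, by rw [h, scalar_apply, smul_one_eq_diagonal]⟩

theorem nonempty_closure_mk_mulEquiv_klein_of_anticommute [Nonempty n] [NeZero (2 : R)]
    {J K : Matrix n n R} (hJ : J * J = 1) (hK : K * K = 1) (hJK : K * J = -(J * K))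
    {u v : GL n R} {a b : R} (hu : u.val = a • J) (hv : v.val = b • K) :
    Nonempty (Subgroup.closure {(u : GL n R ⧸ Subgroup.center (GL n R)), (v : GL n R ⧸ _)} ≃*
      Multiplicative (ZMod 2) × Multiplicative (ZMod 2)) := by
  refine _root_.nonempty_closure_mk_mulEquiv_klein (ε := -1)
    (mem_center_of_val_eq_smul_one (r := -1) (by rw [Units.val_neg, Units.val_one, neg_one_smul]))
    ?_    (mem_center_of_val_eq_smul_one (r := a ^ 2) ?_)
    (mem_center_of_val_eq_smul_one (r := b ^ 2) ?_) ?_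
  · intro h
    obtain ⟨i⟩ := ‹Nonempty n›
    have h' : (-1 : R) = 1 := by
      simpa using congrArg (fun g : GL n R => g.val i i) h
    exact (two_ne_zero : (2 : R) ≠ 0) (by linear_combination -h')
  · rw [Units.val_pow_eq_pow_val, hu, sq, smul_mul_smul_comm, hJ, sq]
  · rw [Units.val_pow_eq_pow_val, hv, sq, smul_mul_smul_comm, hK, sq]
  · ext1
    rw [neg_one_mul, Units.val_neg, Units.val_mul, Units.val_mul, hu, hv, smul_mul_smul_comm,
      smul_mul_smul_comm, hJK, smul_neg, mul_comm]

end Matrix.GeneralLinearGroup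

lemma exp_two_pi_I_div_four : exp (2 * Real.pi * I / 4) = I := by
  rw [show 2 * Real.pi * I / 4 = Real.pi / 2 * I by ring, exp_pi_div_two_mul_I]

section LevelTwo

variable {A B : GL (Fin 2) ℂ} {c t : ℂ}

lemma levelTwo_A_inv_val (hc : c ≠ 0)
    (hA : (A : Matrix (Fin 2) (Fin 2) ℂ) = c • !![I, 0; 0, -1]) :
    ((A⁻¹ : GL (Fin 2) ℂ) : Matrix (Fin 2) (Fin 2) ℂ) = c⁻¹ • !![-I, 0; 0, -1] := by
  apply Units.inv_eq_of_mul_eq_one_right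
  rw [hA, smul_mul_smul_comm, mul_fin_two, mul_inv_cancel₀ hc, one_smul, one_fin_two]
  simp

lemma levelTwo_m₁_val (hc : c ≠ 0) (ht : t ^ 2 = -1)
    (hA : (A : Matrix (Fin 2) (Fin 2) ℂ) = c • !![I, 0; 0, -1])
    (hB : (B : Matrix (Fin 2) (Fin 2) ℂ) = (c / (I + 1)) • !![-1, t; t, I ^ 2]) :
    ((B * A⁻¹ ^ 2 * B : GL (Fin 2) ℂ) : Matrix (Fin 2) (Fin 2) ℂ) = (-I) • !![-1, 0; 0, 1] := by
  have hI : I + 1 ≠ 0 := fun h => by simpa using congrArg im h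
  rw [Units.val_mul, Units.val_mul, Units.val_pow_eq_pow_val, levelTwo_A_inv_val hc hA, hB,
    smul_pow, smul_mul_smul_comm, smul_mul_smul_comm]
  simp only [sq, mul_fin_two, smul_of]
  ext i j
  fin_cases i <;> fin_cases j <;> simp <;> field_simp
  · linear_combination ht - (I + 2) * I_sq
  · linear_combination -ht + (I + 2) * I_sq

lemma levelTwo_m₂_val (ht : t ^ 2 = -1)
    (hB : (B : Matrix (Fin 2) (Fin 2) ℂ) = (c / (I + 1)) • !![-1, t; t, I ^ 2]) :
    ((B ^ 2 : GL (Fin 2) ℂ) : Matrix (Fin 2) (Fin 2) ℂ) =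
      ((c / (I + 1)) ^ 2 * (-2 * t)) • !![0, 1; 1, 0] := by
  have hsq : !![-1, t; t, I ^ 2] ^ 2 = (-2 * t) • !![(0 : ℂ), 1; 1, 0] := by
    rw [sq, mul_fin_two, I_sq, ← sq t, ht]
    ext i j
    fin_cases i <;> fin_cases j <;> norm_num <;> ring
  rw [Units.val_pow_eq_pow_val, hB, smul_pow, hsq, smul_smul]

end LevelTwo

/-- At level `l = 2` (so `q = i`), the images in `PGL(2,ℂ)` of `m₁ = BA⁻²B` and
`m₂ = B²` generate a group isomorphic to the Klein four group `ℤ/2 × ℤ/2`. -/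
theorem stmt_8 (q t c : ℂ)
    (hq : q = Complex.exp (2 * Real.pi * I / 4))
    (ht : t ^ 2 = q * (1 + q + q ^ 2))
    (hc : c = Complex.exp (2 * Real.pi * I / 4 * (-3 / 4)))
    (A B : GL (Fin 2) ℂ)
    (hA : (A : Matrix (Fin 2) (Fin 2) ℂ) = c • !![q, 0; 0, -1])
    (hB : (B : Matrix (Fin 2) (Fin 2) ℂ) = (c / (q + 1)) • !![-1, t; t, q ^ 2]) :
    Nonempty
      ((Subgroup.closure {((B * A⁻¹ ^ 2 * B : GL (Fin 2) ℂ) : PGL2),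
          ((B ^ 2 : GL (Fin 2) ℂ) : PGL2)} : Subgroup PGL2) ≃*
        (Multiplicative (ZMod 2) × Multiplicative (ZMod 2))) := by
  obtain rfl : q = I := hq.trans exp_two_pi_I_div_four
  have ht' : t ^ 2 = -1 := by linear_combination ht + (I + 1) * I_sq
  have hc' : c ≠ 0 := hc ▸ exp_ne_zero _
  exact GeneralLinearGroup.nonempty_closure_mk_mulEquiv_klein_of_anticommute
    (J := !![-1, 0; 0, 1]) (K := !![0, 1; 1, 0])
    (by simp [one_fin_two]) (by simp [one_fin_two])
    (by simp) (levelTwo_m₁_val hc' ht' hA hB) (levelTwo_m₂_val ht' hB)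
end

section
/- Let ρ(S) and ρ(T) be the (l+1)×(l+1) matrices with entries ρ(S)_{jk} = sqrt(2/(l+2))·sin(πjk/(l+2)) and ρ(T)_{jk} = δ_{jk}·exp(iπ(j²/(2(l+2)) − 1/4)), for 1 ≤ j,k ≤ l+1. Then ρ(S) is unitary, ρ(S)² is a scalar multiple of a permutation matrix of order dividing 2, and (ρ(S)ρ(T))³ is a scalar multiple of ρ(S)². -/
/-!
Put `n = l + 2` and `ζ = exp (π i / (2 n))`, a primitive `4n`-th root of unity, so that
`2 i sin (π a / n) = ζ ^ (2 a) - ζ ^ (-2 a)`. The sums over `m = 1, …, n - 1` in the entries of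
`S²` and `T S T S T` have summands that vanish at `m = 0, n` and are invariant under
`m ↦ 2n - m`, so they are half of sums over a full period `m mod 2n`. There, orthogonality of
the characters `m ↦ ζ ^ (2 a m)` gives `S² = 1`, and completing the square in the Gauss sum,
`∑ ζ ^ (m²) ζ ^ (2 a m) = ζ ^ (-a²) ∑ ζ ^ (m²)`, gives `T S T S T = c S`. Hence
`(S T)³ = c S²`, and `S`, being real symmetric with `S² = 1`, is unitary.
-/

open Complex Matrix Finset

theorem Function.Periodic.sum_range_add_int {M : Type*} [AddCommGroup M] {f : ℤ → M} {N : ℕ}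
    (hf : Function.Periodic f N) (a : ℤ) :
    ∑ m ∈ range N, f (m + a) = ∑ m ∈ range N, f m := by
  have shift_one : ∀ g : ℤ → M, Function.Periodic g N →
      ∑ m ∈ range N, g (m + 1) = ∑ m ∈ range N, g m := fun g hg => by
    have h := (sum_range_succ' (fun m : ℕ => g m) N).symm.trans (sum_range_succ _ N)
    simp only [Nat.cast_add, Nat.cast_one, Nat.cast_zero] at h
    rw [← zero_add (N : ℤ), hg 0] at h
    exact add_right_cancel h
  induction a using Int.induction_on with
  | zero => simp
  | succ i ih =>
    rw [← ih, ← shift_one _ (hf.add_const i)]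
    simp only [add_assoc, add_comm (1 : ℤ)]
  | pred i ih =>
    rw [← ih, ← shift_one _ (hf.add_const (-(i : ℤ) - 1))]
    simp only [add_assoc, add_sub_cancel]

theorem Finset.sum_range_two_mul_of_reflect {M : Type*} [AddCommMonoid M] (g : ℤ → M) (n : ℕ)
    (hg : ∀ m, g (2 * (n + 1) - m) = g m) :
    ∑ m ∈ range (2 * (n + 1)), g m = g 0 + g (n + 1) + 2 • ∑ m : Fin n, g (m + 1) := by
  have upper : ∑ m ∈ range n, g ((n + 1 + (m + 1) : ℕ)) = ∑ m ∈ range n, g (m + 1) := by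
    rw [← sum_range_reflect]
    refine sum_congr rfl fun m hm => ?_
    rw [← hg]
    congr 1
    have hm' : ((n - 1 - m : ℕ) : ℤ) = n - 1 - m := by have := mem_range.mp hm; omega
    push_cast [hm']
    ring
  rw [two_mul, sum_range_add, sum_range_succ', sum_range_succ', upper,
    Fin.sum_univ_eq_sum_range (fun m => g (m + 1)), two_nsmul]
  push_cast
  abel

theorem Finset.two_nsmul_sum_fin_eq_sum_range {M : Type*} [AddCommMonoid M] {g : ℤ → M} {l : ℕ}
    (hg : ∀ m, g (2 * (l + 2) - m) = g m) (h0 : g 0 = 0) (hl : g (l + 2) = 0) :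
    2 • ∑ m : Fin (l + 1), g ((m : ℕ) + 1) = ∑ m ∈ range (2 * (l + 2)), g m := by
  have h := sum_range_two_mul_of_reflect g (l + 1) (fun m => by push_cast; rw [← hg]; ring_nf)
  push_cast at h
  rw [h, h0, show ((l : ℤ) + 1 + 1) = l + 2 by ring, hl, zero_add, zero_add]

namespace IsPrimitiveRoot

variable {K : Type*} [Field K] {ζ : K} {k : ℕ}

theorem zpow_eq_zpow_of_dvd [NeZero k] (hζ : IsPrimitiveRoot ζ k) {a b : ℤ}
    (h : (k : ℤ) ∣ a - b) : ζ ^ a = ζ ^ b := by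
  obtain ⟨c, hc⟩ := h
  rw [sub_eq_iff_eq_add'.mp hc, zpow_add₀ (hζ.ne_zero (NeZero.ne k)), _root_.zpow_mul,
    zpow_natCast, hζ.pow_eq_one, _root_.one_zpow, mul_one]

theorem sum_range_zpow_mul (hζ : IsPrimitiveRoot ζ k) (a : ℤ) :
    ∑ m ∈ range k, ζ ^ (a * m) = if (k : ℤ) ∣ a then (k : K) else 0 := by
  simp only [_root_.zpow_mul, zpow_natCast]
  split_ifs with h
  · simp [(hζ.zpow_eq_one_iff_dvd a).mpr h]
  · have hne : ζ ^ a ≠ 1 := fun h' => h ((hζ.zpow_eq_one_iff_dvd a).mp h')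
    rw [geom_sum_eq hne, ← zpow_natCast, ← _root_.zpow_mul, mul_comm, _root_.zpow_mul,
      zpow_natCast, hζ.pow_eq_one, _root_.one_zpow, sub_self, zero_div]

end IsPrimitiveRoot

section GaussSums

variable {K : Type*} [Field K] {n : ℕ} [NeZero n] {ζ : K}

/-- For `ζ = exp (π i / (2 n))` this is `2 i sin (π a / n)`. -/
def twoISin (ζ : K) (a : ℤ) : K := ζ ^ (2 * a) - ζ ^ (-(2 * a))

theorem periodic_zpow_sq (hζ : IsPrimitiveRoot ζ (4 * n)) :
    Function.Periodic (fun m : ℤ => ζ ^ (m ^ 2)) (2 * n : ℕ) := fun m =>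
  hζ.zpow_eq_zpow_of_dvd ⟨m + n, by push_cast; ring⟩

theorem twoISin_mul_natCast (hζ : IsPrimitiveRoot ζ (4 * n)) (x : ℤ) : twoISin ζ (x * n) = 0 :=
  sub_eq_zero.mpr (hζ.zpow_eq_zpow_of_dvd ⟨x, by push_cast; ring⟩)

theorem twoISin_mul_two_mul_sub (hζ : IsPrimitiveRoot ζ (4 * n)) (x m : ℤ) :
    twoISin ζ (x * (2 * n - m)) = -twoISin ζ (x * m) := by
  have hpos : ζ ^ (2 * (x * (2 * n - m))) = ζ ^ (-(2 * (x * m))) :=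
    hζ.zpow_eq_zpow_of_dvd ⟨x, by push_cast; ring⟩
  have hneg : ζ ^ (-(2 * (x * (2 * n - m)))) = ζ ^ (2 * (x * m)) :=
    hζ.zpow_eq_zpow_of_dvd ⟨-x, by push_cast; ring⟩
  rw [twoISin, twoISin, hpos, hneg, neg_sub]

theorem sum_range_zpow_two_mul_mul (hζ : IsPrimitiveRoot ζ (4 * n)) (a : ℤ) :
    ∑ m ∈ range (2 * n), ζ ^ (2 * a * m) = if (2 * n : ℤ) ∣ a then (2 * n : K) else 0 := by
  have hζ2 : IsPrimitiveRoot (ζ ^ 2) (2 * n) :=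
    hζ.pow (by positivity [NeZero.pos n]) (by ring)
  have hpow : ∀ m : ℕ, ζ ^ (2 * a * m) = (ζ ^ 2) ^ (a * m) := fun m => by
    rw [mul_assoc, _root_.zpow_mul]; norm_cast
  simp only [hpow]
  exact_mod_cast hζ2.sum_range_zpow_mul a

theorem sum_range_zpow_sq_mul (hζ : IsPrimitiveRoot ζ (4 * n)) (a : ℤ) :
    ∑ m ∈ range (2 * n), ζ ^ ((m : ℤ) ^ 2) * ζ ^ (2 * a * m)
      = ζ ^ (-(a ^ 2)) * ∑ m ∈ range (2 * n), ζ ^ ((m : ℤ) ^ 2) := by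
  have h0 : ζ ≠ 0 := hζ.ne_zero (NeZero.ne _)
  -- complete the square: `m² + 2am = (m + a)² - a²`
  rw [← (periodic_zpow_sq hζ).sum_range_add_int a, mul_sum]
  refine sum_congr rfl fun m _ => ?_
  rw [← zpow_add₀ h0, ← zpow_add₀ h0]
  ring_nf

theorem twoISin_mul_twoISin (h0 : ζ ≠ 0) (x y m : ℤ) :
    twoISin ζ (x * m) * twoISin ζ (y * m)
      = ζ ^ (2 * (x + y) * m) + ζ ^ (2 * -(x + y) * m)
        - ζ ^ (2 * (x - y) * m) - ζ ^ (2 * -(x - y) * m) := by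
  simp only [twoISin, mul_sub, sub_mul, ← zpow_add₀ h0]
  ring_nf

theorem sum_range_twoISin_mul_twoISin (hζ : IsPrimitiveRoot ζ (4 * n)) {j k : ℤ}
    (hj : 0 < j) (hjn : j < n) (hk : 0 < k) (hkn : k < n) :
    ∑ m ∈ range (2 * n), twoISin ζ (j * m) * twoISin ζ (k * m)
      = if j = k then -(4 * n : K) else 0 := by
  have hsum : ¬ (2 * n : ℤ) ∣ j + k := fun h => by
    have := Int.le_of_dvd (by omega) h; omega
  have hdiff : (2 * n : ℤ) ∣ j - k ↔ j = k :=
    ⟨fun h => by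
      have := Int.eq_zero_of_abs_lt_dvd h (by rw [abs_lt]; omega); omega,
     fun h => by simp [h]⟩
  simp only [twoISin_mul_twoISin (hζ.ne_zero (NeZero.ne _)), sum_add_distrib, sum_sub_distrib,
    sum_range_zpow_two_mul_mul hζ, Int.dvd_neg, hsum, hdiff, if_false]
  split_ifs <;> ring

theorem sum_range_zpow_sq_mul_twoISin_mul_twoISin (hζ : IsPrimitiveRoot ζ (4 * n)) (x y : ℤ) :
    ∑ m ∈ range (2 * n), ζ ^ ((m : ℤ) ^ 2) * (twoISin ζ (x * m) * twoISin ζ (y * m))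
      = -2 * (∑ m ∈ range (2 * n), ζ ^ ((m : ℤ) ^ 2)) * ζ ^ (-(x ^ 2)) * ζ ^ (-(y ^ 2))
        * twoISin ζ (x * y) := by
  have h0 : ζ ≠ 0 := hζ.ne_zero (NeZero.ne _)
  have expand : ∀ m : ℤ, ζ ^ (m ^ 2) * (twoISin ζ (x * m) * twoISin ζ (y * m))
      = ζ ^ (m ^ 2) * ζ ^ (2 * (x + y) * m) + ζ ^ (m ^ 2) * ζ ^ (2 * -(x + y) * m)
        - ζ ^ (m ^ 2) * ζ ^ (2 * (x - y) * m) - ζ ^ (m ^ 2) * ζ ^ (2 * -(x - y) * m) :=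
    fun m => by rw [twoISin_mul_twoISin h0]; ring
  have hplus : ζ ^ (-(x ^ 2)) * ζ ^ (-(y ^ 2)) * ζ ^ (-(2 * (x * y))) = ζ ^ (-((x + y) ^ 2)) := by
    rw [← zpow_add₀ h0, ← zpow_add₀ h0]; ring_nf
  have hminus : ζ ^ (-(x ^ 2)) * ζ ^ (-(y ^ 2)) * ζ ^ (2 * (x * y)) = ζ ^ (-((x - y) ^ 2)) := by
    rw [← zpow_add₀ h0, ← zpow_add₀ h0]; ring_nf
  simp only [expand, sum_add_distrib, sum_sub_distrib, sum_range_zpow_sq_mul hζ, neg_sq]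
  rw [twoISin, ← hplus, ← hminus]
  ring

end GaussSums

section Matrices

variable {K : Type*} [Field K] {l : ℕ} {ζ : K}

def sinMatrix (ζ : K) (l : ℕ) : Matrix (Fin (l + 1)) (Fin (l + 1)) K :=
  of fun j k => twoISin ζ (((j : ℕ) + 1 : ℤ) * ((k : ℕ) + 1))

def quadDiagonal (ζ : K) (l : ℕ) : Matrix (Fin (l + 1)) (Fin (l + 1)) K :=
  diagonal fun j => ζ ^ (((j : ℕ) + 1 : ℤ) ^ 2)

theorem sinMatrix_mul_self (hζ : IsPrimitiveRoot ζ (4 * (l + 2))) (h2 : (2 : K) ≠ 0) :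
    sinMatrix ζ l * sinMatrix ζ l = (-(2 * (l + 2)) : K) • 1 := by
  ext j k
  set g : ℤ → K := fun m => twoISin ζ (((j : ℕ) + 1 : ℤ) * m) * twoISin ζ (((k : ℕ) + 1 : ℤ) * m)
  have hrefl := twoISin_mul_two_mul_sub hζ
  have hzero := twoISin_mul_natCast hζ
  push_cast at hrefl hzero
  have hg := two_nsmul_sum_fin_eq_sum_range (g := g) (l := l)
    (fun m => by simp only [g, hrefl, neg_mul_neg]) (by simp [g, twoISin]) (by simp [g, hzero])
  rw [sum_range_twoISin_mul_twoISin hζ (by omega) (by omega) (by omega) (by omega)] at hg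
  simp only [mul_apply, sinMatrix, of_apply, Matrix.smul_apply, one_apply]
  rw [sum_congr rfl fun m _ => by rw [mul_comm (((m : ℕ) : ℤ) + 1)]]
  refine mul_left_cancel₀ h2 ?_
  rw [nsmul_eq_mul, Nat.cast_ofNat] at hg
  rw [hg]
  by_cases hjk : j = k
  · simp [hjk]; ring
  · have : ((j : ℕ) + 1 : ℤ) ≠ (k : ℕ) + 1 := by omega
    simp [hjk, this]

theorem quadDiagonal_mul_sinMatrix_mul (hζ : IsPrimitiveRoot ζ (4 * (l + 2))) (h2 : (2 : K) ≠ 0) :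
    quadDiagonal ζ l * (sinMatrix ζ l * quadDiagonal ζ l * sinMatrix ζ l) * quadDiagonal ζ l
      = (-∑ m ∈ range (2 * (l + 2)), ζ ^ ((m : ℤ) ^ 2)) • sinMatrix ζ l := by
  ext j k
  set G := ∑ m ∈ range (2 * (l + 2)), ζ ^ ((m : ℤ) ^ 2)
  set j' : ℤ := (j : ℕ) + 1
  set k' : ℤ := (k : ℕ) + 1
  set g : ℤ → K := fun m => ζ ^ (m ^ 2) * (twoISin ζ (j' * m) * twoISin ζ (k' * m))
  have h0 : ζ ≠ 0 := hζ.ne_zero (NeZero.ne _)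
  have hrefl := twoISin_mul_two_mul_sub hζ
  have hzero := twoISin_mul_natCast hζ
  push_cast at hrefl hzero
  have hsq : ∀ m : ℤ, ζ ^ ((2 * (l + 2) - m) ^ 2) = ζ ^ (m ^ 2) := fun m =>
    hζ.zpow_eq_zpow_of_dvd ⟨l + 2 - m, by push_cast; ring⟩
  have hg := two_nsmul_sum_fin_eq_sum_range (g := g) (l := l)
    (fun m => by simp only [g, hrefl, hsq, neg_mul_neg]) (by simp [g, twoISin]) (by simp [g, hzero])
  rw [sum_range_zpow_sq_mul_twoISin_mul_twoISin hζ, nsmul_eq_mul, Nat.cast_ofNat] at hg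
  have hsum : ∑ m : Fin (l + 1), g ((m : ℕ) + 1)
      = -G * ζ ^ (-(j' ^ 2)) * ζ ^ (-(k' ^ 2)) * twoISin ζ (j' * k') :=
    mul_left_cancel₀ h2 (by rw [hg]; ring)
  have hcancel : ∀ x : ℤ, ζ ^ (x ^ 2) * ζ ^ (-(x ^ 2)) = 1 := fun x => by
    rw [← zpow_add₀ h0, add_neg_cancel, zpow_zero]
  rw [quadDiagonal, mul_diagonal, diagonal_mul, mul_apply]
  simp only [mul_diagonal, sinMatrix, of_apply, Matrix.smul_apply, smul_eq_mul]
  have hentry : ∀ m : Fin (l + 1), twoISin ζ (j' * ((m : ℕ) + 1)) * ζ ^ (((m : ℕ) + 1 : ℤ) ^ 2)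
      * twoISin ζ (((m : ℕ) + 1) * k') = g ((m : ℕ) + 1) := fun m => by
    simp only [g, mul_comm _ k']; ring
  rw [sum_congr rfl fun m _ => hentry m, hsum]
  linear_combination (-G * twoISin ζ (j' * k') * ζ ^ (k' ^ 2) * ζ ^ (-(k' ^ 2))) * hcancel j'
    + (-G * twoISin ζ (j' * k')) * hcancel k'

end Matrices

section ModularMatrices

theorem ofReal_sin_eq_twoISin (n : ℕ) (a : ℤ) :
    ((Real.sin (Real.pi * a / n) : ℝ) : ℂ)
      = twoISin (cexp (2 * Real.pi * I / (4 * n : ℕ))) a / (2 * I) := by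
  have hpos : ((2 * a : ℤ) : ℂ) * (2 * Real.pi * I / (4 * n : ℕ)) = (Real.pi * a / n : ℝ) * I := by
    push_cast; ring
  have hneg : ((-(2 * a) : ℤ) : ℂ) * (2 * Real.pi * I / (4 * n : ℕ))
      = -(Real.pi * a / n : ℝ) * I := by
    push_cast; ring
  rw [twoISin, ← exp_int_mul, ← exp_int_mul, hpos, hneg, ofReal_sin, Complex.sin]
  field_simp
  rw [I_sq]
  ring

variable (l : ℕ)

noncomputable def modularS : Matrix (Fin (l + 1)) (Fin (l + 1)) ℂ :=
  of fun j k => ((Real.sqrt (2 / (l + 2)) *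
    Real.sin (Real.pi * (j.1 + 1) * (k.1 + 1) / (l + 2)) : ℝ) : ℂ)

noncomputable def modularT : Matrix (Fin (l + 1)) (Fin (l + 1)) ℂ :=
  diagonal fun j => cexp (Real.pi * I * (((j.1 + 1 : ℕ) : ℂ) ^ 2 / (2 * (l + 2)) - 1 / 4))

theorem modularS_eq_smul_sinMatrix :
    modularS l = ((Real.sqrt (2 / (l + 2)) : ℂ) / (2 * I)) •
      sinMatrix (cexp (2 * Real.pi * I / (4 * (l + 2) : ℕ))) l := by
  ext j k
  have harg : Real.pi * ((j : ℕ) + 1) * ((k : ℕ) + 1) / (l + 2)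
      = Real.pi * ((((j : ℕ) + 1 : ℤ) * ((k : ℕ) + 1) : ℤ) : ℝ) / ((l + 2 : ℕ) : ℝ) := by
    push_cast; ring
  rw [modularS, Matrix.smul_apply, sinMatrix, of_apply, of_apply, smul_eq_mul, ofReal_mul, harg,
    ofReal_sin_eq_twoISin]
  ring

theorem modularT_eq_smul_quadDiagonal :
    modularT l = cexp (-(Real.pi * I / 4)) •
      quadDiagonal (cexp (2 * Real.pi * I / (4 * (l + 2) : ℕ))) l := by
  rw [modularT, quadDiagonal, ← diagonal_smul]
  congr 1
  ext j
  have hl2 : (l + 2 : ℂ) ≠ 0 := by exact_mod_cast (l + 1).succ_ne_zero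
  rw [Pi.smul_apply, smul_eq_mul, ← exp_int_mul, ← exp_add]
  congr 1
  field_simp
  push_cast
  ring

theorem star_modularS : star (modularS l) = modularS l := by
  ext j k
  rw [star_apply, modularS, of_apply, of_apply, Complex.star_def, conj_ofReal,
    mul_right_comm Real.pi]

theorem modularS_mul_self : modularS l * modularS l = 1 := by
  have hsqrt : (Real.sqrt (2 / (l + 2)) : ℂ) * (Real.sqrt (2 / (l + 2)) : ℂ) = 2 / (l + 2) := by
    rw [← ofReal_mul, Real.mul_self_sqrt (by positivity)]; push_cast; rfl
  have hscalar : (Real.sqrt (2 / (l + 2)) : ℂ) / (2 * I) * ((Real.sqrt (2 / (l + 2)) : ℂ) / (2 * I))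
      * -(2 * (l + 2)) = 1 := by
    have hl2 : (l + 2 : ℂ) ≠ 0 := by exact_mod_cast (l + 1).succ_ne_zero
    rw [div_mul_div_comm, hsqrt]
    field_simp
    rw [I_sq]
  rw [modularS_eq_smul_sinMatrix, smul_mul_smul_comm,
    sinMatrix_mul_self (isPrimitiveRoot_exp _ (by positivity)) two_ne_zero, smul_smul, hscalar,
    one_smul]

theorem exists_modularT_mul_modularS_mul :
    ∃ c : ℂ, modularT l * (modularS l * modularT l * modularS l) * modularT l = c • modularS l := by
  refine ⟨cexp (-(Real.pi * I / 4)) ^ 3 * ((Real.sqrt (2 / (l + 2)) : ℂ) / (2 * I)) *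
    -∑ m ∈ range (2 * (l + 2)), cexp (2 * Real.pi * I / (4 * (l + 2) : ℕ)) ^ ((m : ℤ) ^ 2), ?_⟩
  rw [modularT_eq_smul_quadDiagonal, modularS_eq_smul_sinMatrix]
  simp only [Matrix.smul_mul, Matrix.mul_smul, smul_smul,
    quadDiagonal_mul_sinMatrix_mul (isPrimitiveRoot_exp _ (by positivity)) two_ne_zero]
  congr 1
  ring

end ModularMatrices

theorem stmt_18_general (l : ℕ)
    (S T : Matrix (Fin (l + 1)) (Fin (l + 1)) ℂ)
    (hS : ∀ j k : Fin (l + 1), S j k =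
      ((Real.sqrt (2 / (l + 2)) *
        Real.sin (Real.pi * (j.1 + 1) * (k.1 + 1) / (l + 2)) : ℝ) : ℂ))
    (hT : ∀ j k : Fin (l + 1), T j k =
      if j = k then
        Complex.exp (Real.pi * I * (((j.1 + 1 : ℕ) : ℂ) ^ 2 / (2 * (l + 2)) - 1 / 4))
      else 0) :
    S ∈ Matrix.unitaryGroup (Fin (l + 1)) ℂ ∧
    (∃ (c : ℂ) (σ : Equiv.Perm (Fin (l + 1))), σ ^ 2 = 1 ∧
      S ^ 2 = c • (σ.permMatrix ℂ)) ∧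
    (∃ c : ℂ, (S * T) ^ 3 = c • S ^ 2) := by
  obtain rfl : S = modularS l := ext hS
  obtain rfl : T = modularT l := ext fun j k => by rw [hT, modularT, diagonal_apply]
  obtain ⟨c, hc⟩ := exists_modularT_mul_modularS_mul l
  refine ⟨mem_unitaryGroup_iff.mpr ?_, ⟨1, 1, one_pow 2, ?_⟩, ⟨c, ?_⟩⟩
  · rw [star_modularS, modularS_mul_self]
  · rw [sq, modularS_mul_self, permMatrix_one, one_smul]
  · calc (modularS l * modularT l) ^ 3
        = modularS l * (modularT l * (modularS l * modularT l * modularS l) * modularT l) := by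
          simp only [pow_succ, pow_zero, Matrix.one_mul, Matrix.mul_assoc]
      _ = c • modularS l ^ 2 := by rw [hc, Matrix.mul_smul, sq]

/-- The modular `S` and `T` matrices of the level-`l` `SU(2)` WZW characters:
`S` is unitary, `S²` is a scalar multiple of a permutation matrix of order dividing
`2`, and `(ST)³` is a scalar multiple of `S²`; i.e. they give a projective
representation of `PSL(2,ℤ) = ⟨S, T | S² = (ST)³ = e⟩`. -/
theorem stmt_18 (l : ℕ) (hl : 1 ≤ l)
    (S T : Matrix (Fin (l + 1)) (Fin (l + 1)) ℂ)
    (hS : ∀ j k : Fin (l + 1), S j k =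
      ((Real.sqrt (2 / (l + 2)) *
        Real.sin (Real.pi * (j.1 + 1) * (k.1 + 1) / (l + 2)) : ℝ) : ℂ))
    (hT : ∀ j k : Fin (l + 1), T j k =
      if j = k then
        Complex.exp (Real.pi * I * (((j.1 + 1 : ℕ) : ℂ) ^ 2 / (2 * (l + 2)) - 1 / 4))
      else 0) :
    S ∈ Matrix.unitaryGroup (Fin (l + 1)) ℂ ∧
    (∃ (c : ℂ) (σ : Equiv.Perm (Fin (l + 1))), σ ^ 2 = 1 ∧
      S ^ 2 = c • (σ.permMatrix ℂ)) ∧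
    (∃ c : ℂ, (S * T) ^ 3 = c • S ^ 2) :=
  stmt_18_general l S T hS hT
end
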